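/- Let K : ℤ → ℂ satisfy |K(m)| ≤ C₀/|m| for all m ≠ 0, for some constant C₀. Define, for finitely supported f₁, f₂ : ℤ → ℂ, T(f₁,f₂)(n) = ∑_{m ∈ ℤ, m ≠ 0} K(m) f₁(n−m) f₂(n−m²). Then there exists a constant C (depending only on C₀) such that ‖T(f₁,f₂)‖_{ℓ²(ℤ)} ≤ C ‖f₁‖_{ℓ²(ℤ)} ‖f₂‖_{ℓ²(ℤ)} for all such f₁, f₂. -/

import Mathlib

/-!
By Cauchy–Schwarz in `m`,
`|T(f₁,f₂)(n)|² ≤ (∑ₘ |K m|² |f₁(n - m)|²) (∑ₘ |f₂(n - m²)|²)`.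
As `m ↦ m²` is at most two-to-one, the second factor is at most `2 ‖f₂‖²` uniformly in `n`,
and summing the first factor over `n` gives `‖K‖₂² ‖f₁‖²`. The decay `|K m| ≤ C₀ / |m|` makes
`‖K‖₂² ≤ C₀² ∑_{m ≠ 0} 1 / m²` finite.
-/

open MeasureTheory
open scoped ENNReal

namespace ENNReal

theorem tsum_mul_sq_le {ι : Type*} [Countable ι] (a b : ι → ℝ≥0∞) :
    (∑' i, a i * b i) ^ 2 ≤ (∑' i, a i ^ 2) * ∑' i, b i ^ 2 := by
  let _ : MeasurableSpace ι := ⊤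
  have holder := lintegral_mul_le_Lp_mul_Lq Measure.count Real.HolderConjugate.two_two
    (measurable_from_top (f := a)).aemeasurable (measurable_from_top (f := b)).aemeasurable
  simp only [lintegral_count, Pi.mul_apply, rpow_two] at holder
  calc (∑' i, a i * b i) ^ 2
      ≤ ((∑' i, a i ^ 2) ^ (1 / 2 : ℝ) * (∑' i, b i ^ 2) ^ (1 / 2 : ℝ)) ^ 2 := by gcongr
    _ = (∑' i, a i ^ 2) * ∑' i, b i ^ 2 := by
      rw [mul_pow, ← rpow_two, ← rpow_two, ← rpow_mul, ← rpow_mul]; norm_num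

theorem tsum_tsum_mul_comp_sub {ι G : Type*} [AddGroup G] (a : ι → ℝ≥0∞) (s : ι → G)
    (b : G → ℝ≥0∞) : ∑' n, ∑' i, a i * b (n - s i) = (∑' i, a i) * ∑' n, b n := by
  rw [ENNReal.tsum_comm, ← ENNReal.tsum_mul_right]
  refine tsum_congr fun i => ?_
  rw [ENNReal.tsum_mul_left]
  exact congrArg _ ((Equiv.subRight (s i)).tsum_eq b)

end ENNReal

theorem Int.injective_sq_decide_pos :
    Function.Injective fun m : ℤ => (m ^ 2, decide (0 < m)) := by
  rintro m₁ m₂ h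
  simp only [Prod.mk.injEq, decide_eq_decide] at h
  obtain ⟨hsq, hpos⟩ := h
  rcases sq_eq_sq_iff_eq_or_eq_neg.mp hsq with h | h <;> omega

theorem ENNReal.tsum_comp_sq_le_two_mul (g : ℤ → ℝ≥0∞) :
    ∑' m : ℤ, g (m ^ 2) ≤ 2 * ∑' k, g k :=
  calc ∑' m : ℤ, g (m ^ 2) = ∑' m : ℤ, (fun p : ℤ × Bool => g p.1) (m ^ 2, decide (0 < m)) := rfl
    _ ≤ ∑' p : ℤ × Bool, g p.1 :=
      ENNReal.tsum_comp_le_tsum_of_injective Int.injective_sq_decide_pos _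
    _ = ∑' k, ∑' _ : Bool, g k := ENNReal.tsum_prod (f := fun k _ => g k)
    _ = ∑' k, 2 * g k := by simp only [tsum_bool, two_mul]
    _ = 2 * ∑' k, g k := ENNReal.tsum_mul_left

namespace MeasureTheory

variable {α : Type*} [MeasurableSpace α] [MeasurableSingletonClass α]

theorem eLpNorm_two_count_sq {ε : Type*} [TopologicalSpace ε] [ContinuousENorm ε] (f : α → ε) :
    eLpNorm f 2 Measure.count ^ 2 = ∑' a, ‖f a‖ₑ ^ 2 := by
  simpa [lintegral_count] using
    eLpNorm_nnreal_pow_eq_lintegral (f := f) (μ := Measure.count) (p := 2) two_ne_zero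

theorem eLpNorm_two_count_lt_top_of_finite_support {E : Type*} [NormedAddCommGroup E]
    {f : α → E} (hf : (Function.support f).Finite) : eLpNorm f 2 Measure.count < ∞ := by
  have hsq : eLpNorm f 2 Measure.count ^ 2 < ∞ := by
    rw [eLpNorm_two_count_sq, tsum_eq_sum' (s := hf.toFinset) (by simp)]
    exact ENNReal.sum_lt_top.mpr fun a _ => by simp
  exact (ENNReal.pow_lt_top_iff.mp hsq).resolve_right two_ne_zero

end MeasureTheory

theorem tsum_enorm_sq_le_of_norm_le_div_abs {C₀ : ℝ} {K : ℤ → ℂ}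
    (hK : ∀ m : ℤ, m ≠ 0 → ‖K m‖ ≤ C₀ / |(m : ℝ)|) :
    ∑' m : {m : ℤ // m ≠ 0}, ‖K m‖ₑ ^ 2
      ≤ ENNReal.ofReal (C₀ ^ 2 * ∑' m : {m : ℤ // m ≠ 0}, 1 / ((m : ℤ) : ℝ) ^ 2) := by
  have hsum : Summable fun m : {m : ℤ // m ≠ 0} => 1 / ((m : ℤ) : ℝ) ^ 2 :=
    ((Real.summable_one_div_int_pow (p := 2)).mpr one_lt_two).subtype _
  rw [← tsum_mul_left, ENNReal.ofReal_tsum_of_nonneg (fun _ => by positivity) (hsum.mul_left _)]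
  refine ENNReal.tsum_le_tsum fun m => ?_
  rw [← ofReal_norm, ← ENNReal.ofReal_pow (norm_nonneg _)]
  refine ENNReal.ofReal_le_ofReal ?_
  calc ‖K m‖ ^ 2 ≤ (C₀ / |((m : ℤ) : ℝ)|) ^ 2 := pow_le_pow_left₀ (norm_nonneg _) (hK m m.2) 2
    _ = C₀ ^ 2 * (1 / ((m : ℤ) : ℝ) ^ 2) := by rw [div_pow, sq_abs]; ring

theorem eLpNorm_tsum_mul_shift_mul_sq_shift_sq_le (s : Set ℤ) (K f₁ f₂ : ℤ → ℂ) :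
    eLpNorm (fun n : ℤ => ∑' m : s, K m * f₁ (n - m) * f₂ (n - (m : ℤ) ^ 2)) 2 Measure.count ^ 2
      ≤ 2 * (∑' m : s, ‖K m‖ₑ ^ 2) * eLpNorm f₁ 2 Measure.count ^ 2
          * eLpNorm f₂ 2 Measure.count ^ 2 := by
  simp only [eLpNorm_two_count_sq]
  set A : ℤ → ℝ≥0∞ := fun n => ∑' m : s, (‖K m‖ₑ * ‖f₁ (n - m)‖ₑ) ^ 2
  have hpointwise : ∀ n : ℤ, ‖∑' m : s, K m * f₁ (n - m) * f₂ (n - (m : ℤ) ^ 2)‖ₑ ^ 2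
      ≤ A n * (2 * ∑' k, ‖f₂ k‖ₑ ^ 2) := fun n => by
    calc ‖∑' m : s, K m * f₁ (n - m) * f₂ (n - (m : ℤ) ^ 2)‖ₑ ^ 2
        ≤ (∑' m : s, ‖K m‖ₑ * ‖f₁ (n - m)‖ₑ * ‖f₂ (n - (m : ℤ) ^ 2)‖ₑ) ^ 2 := by
          gcongr
          simpa only [enorm_mul] using
            enorm_tsum_le_tsum_enorm (f := fun m : s => K m * f₁ (n - m) * f₂ (n - (m : ℤ) ^ 2))
      _ ≤ A n * ∑' m : s, ‖f₂ (n - (m : ℤ) ^ 2)‖ₑ ^ 2 := ENNReal.tsum_mul_sq_le _ _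
      _ ≤ A n * ∑' m : ℤ, ‖f₂ (n - m ^ 2)‖ₑ ^ 2 := by
          gcongr
          exact ENNReal.tsum_comp_le_tsum_of_injective Subtype.val_injective
            fun m : ℤ => ‖f₂ (n - m ^ 2)‖ₑ ^ 2
      _ ≤ A n * (2 * ∑' k, ‖f₂ (n - k)‖ₑ ^ 2) := by
          gcongr
          exact ENNReal.tsum_comp_sq_le_two_mul fun k => ‖f₂ (n - k)‖ₑ ^ 2
      _ = A n * (2 * ∑' k, ‖f₂ k‖ₑ ^ 2) :=
          congrArg (fun t => A n * (2 * t)) ((Equiv.subLeft n).tsum_eq fun k => ‖f₂ k‖ₑ ^ 2)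
  have hA : ∑' n, A n = (∑' m : s, ‖K m‖ₑ ^ 2) * ∑' k, ‖f₁ k‖ₑ ^ 2 := by
    simp only [A, mul_pow]
    exact ENNReal.tsum_tsum_mul_comp_sub _ Subtype.val fun k => ‖f₁ k‖ₑ ^ 2
  calc ∑' n, ‖∑' m : s, K m * f₁ (n - m) * f₂ (n - (m : ℤ) ^ 2)‖ₑ ^ 2
      ≤ ∑' n, A n * (2 * ∑' k, ‖f₂ k‖ₑ ^ 2) := ENNReal.tsum_le_tsum hpointwise
    _ = 2 * (∑' m : s, ‖K m‖ₑ ^ 2) * (∑' k, ‖f₁ k‖ₑ ^ 2) * ∑' k, ‖f₂ k‖ₑ ^ 2 := by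
      rw [ENNReal.tsum_mul_right, hA]; ring

/-- Discrete bilinear operator `T(f₁,f₂)(n) = ∑_{m ≠ 0} K(m) f₁(n-m) f₂(n-m²)` with a kernel
satisfying `|K(m)| ≤ C₀/|m|` is bounded on `ℓ²(ℤ) × ℓ²(ℤ) → ℓ²(ℤ)`. -/
theorem stmt18 (C₀ : ℝ) (K : ℤ → ℂ) (hK : ∀ m : ℤ, m ≠ 0 → ‖K m‖ ≤ C₀ / |(m : ℝ)|) :
    ∃ C : ℝ, 0 < C ∧
      ∀ f₁ f₂ : ℤ → ℂ, (Function.support f₁).Finite → (Function.support f₂).Finite →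
        eLpNorm
            (fun n : ℤ => ∑' m : {m : ℤ // m ≠ 0}, K m * f₁ (n - m) * f₂ (n - (m : ℤ) ^ 2)) 2
            (Measure.count : Measure ℤ)
          ≤ ENNReal.ofReal
              (C * (eLpNorm f₁ 2 (Measure.count : Measure ℤ)).toReal *
                (eLpNorm f₂ 2 (Measure.count : Measure ℤ)).toReal) := by
  set S := ∑' m : {m : ℤ // m ≠ 0}, 1 / ((m : ℤ) : ℝ) ^ 2
  set C := √(2 * (C₀ ^ 2 * S)) + 1
  have hC : 2 * (C₀ ^ 2 * S) ≤ C ^ 2 := by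
    have hS : 0 ≤ S := tsum_nonneg fun _ => by positivity
    nlinarith [Real.sq_sqrt (by positivity : 0 ≤ 2 * (C₀ ^ 2 * S)),
      Real.sqrt_nonneg (2 * (C₀ ^ 2 * S))]
  refine ⟨C, by positivity, fun f₁ f₂ h₁ h₂ => ?_⟩
  have hK₂ : 2 * ∑' m : {m : ℤ // m ≠ 0}, ‖K m‖ₑ ^ 2 ≤ ENNReal.ofReal (C ^ 2) := by
    grw [tsum_enorm_sq_le_of_norm_le_div_abs hK, ← ENNReal.ofReal_ofNat 2,
      ← ENNReal.ofReal_mul zero_le_two, hC]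
  rw [← ENNReal.pow_le_pow_left_iff two_ne_zero]
  calc _ ≤ 2 * (∑' m : {m : ℤ // m ≠ 0}, ‖K m‖ₑ ^ 2) * eLpNorm f₁ 2 Measure.count ^ 2
          * eLpNorm f₂ 2 Measure.count ^ 2 :=
        eLpNorm_tsum_mul_shift_mul_sq_shift_sq_le {m | m ≠ 0} K f₁ f₂
    _ ≤ ENNReal.ofReal (C ^ 2) * eLpNorm f₁ 2 Measure.count ^ 2
          * eLpNorm f₂ 2 Measure.count ^ 2 := by gcongr
    _ = _ := by
      rw [ENNReal.ofReal_pow (by positivity), ENNReal.ofReal_mul (by positivity),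
        ENNReal.ofReal_mul (by positivity),
        ENNReal.ofReal_toReal (eLpNorm_two_count_lt_top_of_finite_support h₁).ne,
        ENNReal.ofReal_toReal (eLpNorm_two_count_lt_top_of_finite_support h₂).ne]
      ring
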